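/- Let G be a connected graph with principal eigenvector X (the positive unit eigenvector for ρ(G)), let u, v be vertices, and let v₁, …, v_s be neighbors of v that are not in the closed neighborhood of u. Set G* = G − {vv₁,…,vv_s} + {uv₁,…,uv_s}. If x_u ≥ x_v, then ρ(G) < ρ(G*). -/

import Mathlib

open SimpleGraph

/-- `H` is a minor of `G`: there are nonempty pairwise-disjoint connected branch sets
in `G`, one for each vertex of `H`, with an edge of `G` between the branch sets of any
two adjacent vertices of `H`. -/
def SimpleGraph.IsMinorOf {β V : Type*} (H : SimpleGraph β) (G : SimpleGraph V) : Prop :=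
  ∃ f : β → Set V,
    (∀ b, (f b).Nonempty) ∧
    (Pairwise fun b₁ b₂ => Disjoint (f b₁) (f b₂)) ∧
    (∀ b, (G.induce (f b)).Connected) ∧
    (∀ b₁ b₂, H.Adj b₁ b₂ → ∃ a₁ ∈ f b₁, ∃ a₂ ∈ f b₂, G.Adj a₁ a₂)

/-- A graph is outerplanar iff it has no `K₄` minor and no `K_{2,3}` minor. -/
def SimpleGraph.Outerplanar {V : Type*} (G : SimpleGraph V) : Prop :=
  ¬ (completeGraph (Fin 4)).IsMinorOf G ∧
  ¬ (completeBipartiteGraph (Fin 2) (Fin 3)).IsMinorOf G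

/-- The graph obtained from `G` by adding the edge `uv`. -/
def SimpleGraph.addEdge {V : Type*} (G : SimpleGraph V) (u v : V) : SimpleGraph V :=
  G ⊔ SimpleGraph.fromEdgeSet {s(u, v)}

/-- An (edge-)maximal bipartite outerplanar graph: bipartite and outerplanar, and adding any
new edge between distinct non-adjacent vertices destroys outerplanarity or bipartiteness. -/
def SimpleGraph.MaxBipOuterplanar {V : Type*} (G : SimpleGraph V) : Prop :=
  G.Outerplanar ∧ G.Colorable 2 ∧
    ∀ u v : V, u ≠ v → ¬ G.Adj u v →
      ¬ ((G.addEdge u v).Outerplanar ∧ (G.addEdge u v).Colorable 2)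

/-- A graph on at least 3 vertices is 2-connected if it is connected and remains
connected after deleting any single vertex. -/
def SimpleGraph.TwoConnected {V : Type*} [Fintype V] (G : SimpleGraph V) : Prop :=
  3 ≤ Fintype.card V ∧ G.Connected ∧
    ∀ v : V, (((⊤ : G.Subgraph).deleteVerts {v}).coe).Connected

/-- The spectral radius of a graph: the largest (real) eigenvalue of its adjacency matrix. -/
noncomputable def SimpleGraph.specRad {V : Type*} [Fintype V] (G : SimpleGraph V) : ℝ := by
  classical exact sSup (spectrum ℝ (G.adjMatrix ℝ))

/-- The least eigenvalue of a graph: the smallest (real) eigenvalue of its adjacency matrix. -/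
noncomputable def SimpleGraph.leastEig {V : Type*} [Fintype V] (G : SimpleGraph V) : ℝ := by
  classical exact sInf (spectrum ℝ (G.adjMatrix ℝ))

/-- The star on `n` vertices: vertex `0` adjacent to all others. -/
def starGraph (n : ℕ) : SimpleGraph (Fin n) where
  Adj i j := i ≠ j ∧ (i.val = 0 ∨ j.val = 0)
  symm := by constructor; intro i j h; exact ⟨h.1.symm, h.2.symm⟩
  loopless := by constructor; intro i h; exact h.1 rfl

/-- The spectral radius of a real square matrix: the supremum of the moduli of its
complex eigenvalues. -/
noncomputable def matSpecRad {n : ℕ} (A : Matrix (Fin n) (Fin n) ℝ) : ℝ :=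
  sSup ((‖·‖) '' spectrum ℂ (A.map Complex.ofReal))

/-- Irreducibility of a nonnegative matrix: for all `i j` some power has positive `(i,j)` entry. -/
def MatIrreducible {n : ℕ} (A : Matrix (Fin n) (Fin n) ℝ) : Prop :=
  ∀ i j, ∃ k : ℕ, 0 < (A ^ k) i j

/-- A combinatorial plane embedding of a (connected) graph `G`: a family of closed walks
(face boundaries) such that every edge of `G` lies on exactly two face sides, together
with Euler's formula. -/
structure PlaneEmbedding {V : Type*} [Fintype V] [DecidableEq V]
    (G : SimpleGraph V) [DecidableRel G.Adj] where
  numFaces : ℕ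
  base : Fin numFaces → V
  boundary : (f : Fin numFaces) → G.Walk (base f) (base f)
  edge_twice : ∀ e ∈ G.edgeSet, (∑ f : Fin numFaces, ((boundary f).edges.count e)) = 2
  euler : (Fintype.card V : ℤ) + numFaces - G.edgeFinset.card = 2

/-- An outerplane embedding: a plane embedding with a distinguished (outer) face whose
boundary passes through every vertex of `G`. -/
structure OuterplaneEmbedding {V : Type*} [Fintype V] [DecidableEq V]
    (G : SimpleGraph V) [DecidableRel G.Adj] extends PlaneEmbedding G where
  outer : Fin numFaces
  outer_all : ∀ v : V, v ∈ (boundary outer).support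

/-!
Let `A`, `A*` be the adjacency matrices of `G`, `G*`, let `χ` be the indicator vector of
`S = {v₁, …, v_s}` and `σ = ∑ᵢ x_{vᵢ} > 0`. Then `A* = A + (e_u - e_v) χᵀ + χ (e_u - e_v)ᵀ`, so
`xᵀ A* x = ρ(G) xᵀx + 2 (x_u - x_v) σ ≥ ρ(G) xᵀx`, and the Rayleigh bound gives `ρ(G) ≤ ρ(G*)`.
Equality would make `x` a `ρ(G)`-eigenvector of `A*`, which fails at `v`:
`(A* x)_v = ρ(G) x_v - σ`.
-/

open Matrix Finset

namespace Matrix.IsHermitian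

variable {n : Type*} [Fintype n] [DecidableEq n] {A : Matrix n n ℝ}

open scoped Pointwise in
theorem posSemidef_sSup_spectrum_smul_one_sub (hA : A.IsHermitian) :
    (sSup (spectrum ℝ A) • (1 : Matrix n n ℝ) - A).PosSemidef := by
  set μ := sSup (spectrum ℝ A)
  have hM : (μ • (1 : Matrix n n ℝ) - A).IsHermitian :=
    (by simp [IsHermitian] : (μ • (1 : Matrix n n ℝ)).IsHermitian).sub hA
  have hspec : spectrum ℝ (μ • (1 : Matrix n n ℝ) - A) = ({μ} : Set ℝ) - spectrum ℝ A := by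
    rw [← Algebra.algebraMap_eq_smul_one, spectrum.singleton_sub_eq]
  refine hM.posSemidef_iff_eigenvalues_nonneg.mpr fun i => ?_
  obtain ⟨a, rfl, b, hb, hab⟩ := hspec ▸ hM.eigenvalues_mem_spectrum_real i
  have := le_csSup A.finite_real_spectrum.bddAbove hb
  simp only [Pi.zero_apply, ← hab]
  linarith

theorem lt_sSup_spectrum (hA : A.IsHermitian) {x : n → ℝ} (hx : x ≠ 0) {ρ : ℝ}
    (hle : ρ * (x ⬝ᵥ x) ≤ x ⬝ᵥ A *ᵥ x) (hne : A *ᵥ x ≠ ρ • x) :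
    ρ < sSup (spectrum ℝ A) := by
  set μ := sSup (spectrum ℝ A)
  have hM := hA.posSemidef_sSup_spectrum_smul_one_sub
  have hquad : x ⬝ᵥ (μ • 1 - A) *ᵥ x = μ * (x ⬝ᵥ x) - x ⬝ᵥ A *ᵥ x := by
    simp [sub_mulVec, dotProduct_sub, smul_mulVec, dotProduct_smul]
  have hxx : 0 < x ⬝ᵥ x :=
    lt_of_le_of_ne (Finset.sum_nonneg fun i _ => mul_self_nonneg (x i))
      (Ne.symm (dotProduct_self_eq_zero.not.mpr hx))
  by_contra! hμρ
  have hzero : x ⬝ᵥ (μ • 1 - A) *ᵥ x = 0 :=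
    le_antisymm (by nlinarith) (by simpa using hM.dotProduct_mulVec_nonneg x)
  have hμ : μ = ρ := by nlinarith
  have hAx := (hM.dotProduct_mulVec_zero_iff x).mp (by simpa using hzero)
  rw [sub_mulVec, smul_mulVec, one_mulVec, sub_eq_zero] at hAx
  exact hne (hμ ▸ hAx.symm)

end Matrix.IsHermitian

namespace SimpleGraph

variable {V : Type*} (G : SimpleGraph V)

def transferEdges (v u : V) (S : Finset V) : SimpleGraph V :=
  G.deleteEdges {e | ∃ w ∈ S, e = s(v, w)} ⊔ fromEdgeSet {e | ∃ w ∈ S, e = s(u, w)}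

variable {G} {v u : V} {S : Finset V}

theorem transferEdges_adj (hSv : ∀ w ∈ S, G.Adj v w) (hSu : ∀ w ∈ S, w ≠ u ∧ ¬ G.Adj u w)
    {a b : V} : (G.transferEdges v u S).Adj a b ↔
      G.Adj a b ∧ ¬ (a = v ∧ b ∈ S) ∧ ¬ (b = v ∧ a ∈ S) ∨ a = u ∧ b ∈ S ∨ b = u ∧ a ∈ S := by
  simp only [transferEdges, sup_adj, deleteEdges_adj, fromEdgeSet_adj, Set.mem_ofPred_eq,
    Sym2.eq_iff]
  grind [Adj.ne, Adj.symm]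

section AdjMatrix

variable [DecidableEq V] [DecidableRel G.Adj] [DecidableRel (G.transferEdges v u S).Adj]

theorem adjMatrix_transferEdges {R : Type*} [Ring R]
    (hSv : ∀ w ∈ S, G.Adj v w) (hSu : ∀ w ∈ S, w ≠ u ∧ ¬ G.Adj u w) :
    (G.transferEdges v u S).adjMatrix R = G.adjMatrix R +
      vecMulVec (Pi.single u 1 - Pi.single v 1) (fun w => if w ∈ S then 1 else 0) +
      vecMulVec (fun w => if w ∈ S then 1 else 0) (Pi.single u 1 - Pi.single v 1) := by
  ext a b
  simp only [adjMatrix_apply, transferEdges_adj hSv hSu, Matrix.add_apply, vecMulVec_apply,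
    Pi.sub_apply, Pi.single_apply]
  have hvS : v ∉ S := fun h => (hSv v h).ne rfl
  have huS : u ∉ S := fun h => (hSu u h).1 rfl
  have hSv' : ∀ w ∈ S, G.Adj w v := fun w hw => (hSv w hw).symm
  have hSu' : ∀ w ∈ S, ¬ G.Adj w u := fun w hw h => (hSu w hw).2 h.symm
  by_cases ha : a ∈ S <;> by_cases hb : b ∈ S <;>
    simp only [ha, hb, if_true, if_false, mul_one, mul_zero, one_mul, zero_mul, add_zero, and_true,
      and_false, not_false_eq_true, or_false, false_or] <;>
    split_ifs <;> simp_all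

theorem adjMatrix_transferEdges_mulVec [Fintype V] {R : Type*} [CommRing R]
    (hSv : ∀ w ∈ S, G.Adj v w) (hSu : ∀ w ∈ S, w ≠ u ∧ ¬ G.Adj u w) (x : V → R) :
    (G.transferEdges v u S).adjMatrix R *ᵥ x = G.adjMatrix R *ᵥ x +
      (∑ w ∈ S, x w) • (Pi.single u 1 - Pi.single v 1) +
      (x u - x v) • fun w => if w ∈ S then 1 else 0 := by
  have hχ : (fun w => if w ∈ S then 1 else 0) ⬝ᵥ x = ∑ w ∈ S, x w := by
    simp [dotProduct, ite_mul, Finset.sum_ite_mem]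
  rw [adjMatrix_transferEdges hSv hSu, add_mulVec, add_mulVec, vecMulVec_mulVec,
    vecMulVec_mulVec, op_smul_eq_smul, op_smul_eq_smul, hχ, sub_dotProduct,
    single_one_dotProduct, single_one_dotProduct]

theorem adjMatrix_transferEdges_mulVec_apply_left [Fintype V] {R : Type*} [CommRing R]
    (hSv : ∀ w ∈ S, G.Adj v w) (hSu : ∀ w ∈ S, w ≠ u ∧ ¬ G.Adj u w) (huv : u ≠ v) (x : V → R) :
    ((G.transferEdges v u S).adjMatrix R *ᵥ x) v = (G.adjMatrix R *ᵥ x) v - ∑ w ∈ S, x w := by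
  have hvS : v ∉ S := fun h => (hSv v h).ne rfl
  rw [adjMatrix_transferEdges_mulVec hSv hSu]
  simp only [Pi.add_apply, Pi.smul_apply, Pi.sub_apply, Pi.single_eq_same,
    Pi.single_eq_of_ne huv.symm, if_neg hvS, smul_eq_mul]
  ring

theorem dotProduct_adjMatrix_transferEdges_mulVec [Fintype V] {R : Type*} [CommRing R]
    (hSv : ∀ w ∈ S, G.Adj v w) (hSu : ∀ w ∈ S, w ≠ u ∧ ¬ G.Adj u w) (x : V → R) :
    x ⬝ᵥ (G.transferEdges v u S).adjMatrix R *ᵥ x =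
      x ⬝ᵥ G.adjMatrix R *ᵥ x + 2 * (x u - x v) * ∑ w ∈ S, x w := by
  have hχ : x ⬝ᵥ (fun w => if w ∈ S then 1 else 0) = ∑ w ∈ S, x w := by
    simp [dotProduct, Finset.sum_ite_mem]
  rw [adjMatrix_transferEdges_mulVec hSv hSu, dotProduct_add, dotProduct_add, dotProduct_smul,
    dotProduct_smul, dotProduct_sub, dotProduct_single_one, dotProduct_single_one, hχ,
    smul_eq_mul, smul_eq_mul]
  ring

end AdjMatrix

variable [Fintype V]

theorem specRad_eq_sSup_spectrum [DecidableEq V] [DecidableRel G.Adj] :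
    G.specRad = sSup (spectrum ℝ (G.adjMatrix ℝ)) := by
  unfold specRad
  congr!

theorem specRad_lt_specRad_transferEdges [DecidableRel G.Adj] {x : V → ℝ}
    (hpos : ∀ w, 0 < x w) (heig : G.adjMatrix ℝ *ᵥ x = G.specRad • x) (hS : S.Nonempty)
    (hSv : ∀ w ∈ S, G.Adj v w) (hSu : ∀ w ∈ S, w ≠ u ∧ ¬ G.Adj u w) (hx : x v ≤ x u) :
    G.specRad < (G.transferEdges v u S).specRad := by
  classical
  obtain ⟨w₀, hw₀⟩ := hS
  have huv : u ≠ v := fun h => (hSu w₀ hw₀).2 (h ▸ hSv w₀ hw₀)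
  have hsum : 0 < ∑ w ∈ S, x w := Finset.sum_pos (fun w _ => hpos w) ⟨w₀, hw₀⟩
  have hx0 : x ≠ 0 := fun h => (hpos w₀).ne' (congrFun h w₀)
  rw [specRad_eq_sSup_spectrum (G := G.transferEdges v u S)]
  refine ((G.transferEdges v u S).isHermitian_adjMatrix ℝ).lt_sSup_spectrum hx0 ?_ fun h => ?_
  · rw [dotProduct_adjMatrix_transferEdges_mulVec hSv hSu, heig, dotProduct_smul, smul_eq_mul]
    nlinarith
  · have hrow := adjMatrix_transferEdges_mulVec_apply_left hSv hSu huv x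
    rw [h, heig] at hrow
    simp only [Pi.smul_apply, smul_eq_mul] at hrow
    linarith

end SimpleGraph

theorem stmt17_general {V : Type*} [Fintype V]
    (G : SimpleGraph V) [DecidableRel G.Adj]
    (X : V → ℝ) (hpos : ∀ w, 0 < X w)
    (heig : (G.adjMatrix ℝ).mulVec X = G.specRad • X)
    (u v : V) (s : ℕ) (hs : 1 ≤ s) (vs : Fin s → V)
    (hadj : ∀ i, G.Adj v (vs i))
    (hnbr : ∀ i, vs i ≠ u ∧ ¬ G.Adj u (vs i))
    (hxy : X v ≤ X u) :
    G.specRad <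
      ((G.deleteEdges {e | ∃ i, e = s(v, vs i)}) ⊔
        SimpleGraph.fromEdgeSet {e | ∃ i, e = s(u, vs i)}).specRad := by
  classical
  have htransfer : G.deleteEdges {e | ∃ i, e = s(v, vs i)} ⊔
      fromEdgeSet {e | ∃ i, e = s(u, vs i)} = G.transferEdges v u (univ.image vs) := by
    simp [transferEdges]
  rw [htransfer]
  exact specRad_lt_specRad_transferEdges hpos heig (univ_nonempty_iff.mpr ⟨⟨0, hs⟩⟩ |>.image vs)
    (by simpa using hadj) (by simpa using hnbr) hxy

theorem stmt17 {V : Type*} [Fintype V] [DecidableEq V]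
    (G : SimpleGraph V) [DecidableRel G.Adj] (hG : G.Connected)
    (X : V → ℝ) (hpos : ∀ w, 0 < X w) (hunit : ∑ w : V, X w ^ 2 = 1)
    (heig : (G.adjMatrix ℝ).mulVec X = G.specRad • X)
    (u v : V) (s : ℕ) (hs : 1 ≤ s) (vs : Fin s → V) (hinj : Function.Injective vs)
    (hadj : ∀ i, G.Adj v (vs i))
    (hnbr : ∀ i, vs i ≠ u ∧ ¬ G.Adj u (vs i))
    (hxy : X v ≤ X u) :
    G.specRad <
      ((G.deleteEdges {e | ∃ i, e = s(v, vs i)}) ⊔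
        SimpleGraph.fromEdgeSet {e | ∃ i, e = s(u, vs i)}).specRad :=
  stmt17_general G X hpos heig u v s hs vs hadj hnbr hxy
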